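/- If Cm > 0, all demands are strictly positive, there are no quantity discounts (constant unit price Ca), and Cd is large enough (Cd ≥ 0 with μ = 0 and Cd > Cp per unit per period, specifically Cd·α(i+1) > Cp for all i), then no optimal strategy contains an order covering more than μ + 1 + ⌈Cp/(Cd·α_min)⌉ periods — in particular, the deterioration penalty bounds the maximal lot coverage in any optimal solution. -/
import Mathlib


/-- The list of orders `(start period, coverage length)` of a strategy given as a
composition (list of parts), with the first order at period `s`. -/
def ordersFrom : ℕ → List ℕ → List (ℕ × ℕ)
  | _, [] => []
  | s, t :: rest => (s, t) :: ordersFrom (s + t) rest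

/-- Total cost of a strategy: ordering + holding + acquisition (constant unit
price `Ca`, no discounts) + deterioration costs. -/
def CT (Cp Cm Ca Cd : ℝ) (μ : ℕ) (α : ℕ → ℝ) (l : List ℕ) : ℝ :=
  Cp * l.length
  + ((ordersFrom 1 l).map (fun p => Cm * ∑ s ∈ Finset.range p.2, (s : ℝ) * α (p.1 + s))).sum
  + ((ordersFrom 1 l).map (fun p => Ca * ∑ s ∈ Finset.range p.2, α (p.1 + s))).sum
  + ((ordersFrom 1 l).map
      (fun p => Cd * ∑ s ∈ Finset.range p.2, α (p.1 + s) * max ((s : ℝ) - (μ : ℝ)) 0)).sum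


lemma ordersFrom_append (s : ℕ) (l1 l2 : List ℕ) :
    ordersFrom s (l1 ++ l2) = ordersFrom s l1 ++ ordersFrom (s + l1.sum) l2 := by
  induction l1 generalizing s with
  | nil => simp [ordersFrom]
  | cons h t ih => simp [ordersFrom, ih, Nat.add_assoc]

lemma mem_ordersFrom {a b s : ℕ} {l : List ℕ} (h : (a, b) ∈ ordersFrom s l) :
    ∃ l1 l2, l = l1 ++ b :: l2 ∧ a = s + l1.sum := by
  induction l generalizing s with
  | nil => simp [ordersFrom] at h
  | cons x xs ih =>
    simp only [ordersFrom, List.mem_cons, Prod.mk.injEq] at h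
    rcases h with ⟨ha, hb⟩ | h
    · exact ⟨[], xs, by simp [hb], by simp [ha]⟩
    · obtain ⟨l1, l2, h1, h2⟩ := ih h
      exact ⟨x :: l1, l2, by simp [h1], by simp [h2]; ring⟩

/-- With `Cm > 0`, strictly positive demands bounded below by `αmin > 0` on the
horizon, constant unit price `Ca`, and `Cd > 0`, a strategy containing an order
covering more than `μ + 1 + Cp/(Cd·αmin)` periods is not optimal: splitting that
order yields a strictly cheaper strategy. -/
theorem stmt15 (N : ℕ) (hN : 1 ≤ N) (Cp Cm Ca Cd αmin : ℝ) (μ : ℕ)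
    (hCp : 0 ≤ Cp) (hCm : 0 < Cm) (hCd : 0 < Cd) (hαmin : 0 < αmin)
    (α : ℕ → ℝ) (hαpos : ∀ i, 0 < α i)
    (hmin : ∀ i, 1 ≤ i → i ≤ N → αmin ≤ α i)
    (l : List ℕ) (hpos : ∀ x ∈ l, 0 < x) (hsum : l.sum = N)
    (hbig : ∃ p ∈ ordersFrom 1 l, ((μ : ℝ) + 1 + Cp / (Cd * αmin) < (p.2 : ℝ))) :
    ∃ l' : List ℕ, (∀ x ∈ l', 0 < x) ∧ l'.sum = N ∧
      CT Cp Cm Ca Cd μ α l' < CT Cp Cm Ca Cd μ α l := by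
  obtain ⟨⟨a, b⟩, hp, hbigp⟩ := hbig
  simp only at hbigp
  obtain ⟨l1, l2, hl, ha⟩ := mem_ordersFrom hp
  have hdivnn : (0:ℝ) ≤ Cp / (Cd * αmin) := div_nonneg hCp (by positivity)
  have hbR : ((μ:ℝ) + 1) < (b : ℝ) := by linarith
  have hbμ : μ + 1 < b := by exact_mod_cast hbR
  obtain ⟨b', rfl⟩ : ∃ b', b = (μ + 1) + b' := ⟨b - (μ+1), by omega⟩
  have hb'pos : 0 < b' := by omega
  subst hl
  have hCpb : Cp < Cd * αmin * b' := by
    have h1 : Cp / (Cd * αmin) < (b' : ℝ) := by push_cast at hbigp; linarith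
    have := (div_lt_iff₀ (by positivity : (0:ℝ) < Cd * αmin)).mp h1
    linarith
  have hsumN : l1.sum + ((μ + 1 + b') + l2.sum) = N := by
    rw [← hsum]; simp
  have hα2 : ∀ s ∈ Finset.range b', αmin ≤ α (a + (μ + 1) + s) := by
    intro s hs
    rw [Finset.mem_range] at hs
    apply hmin <;> omega
  refine ⟨l1 ++ (μ+1) :: b' :: l2, ?_, ?_, ?_⟩
  · intro x hx
    simp only [List.mem_append, List.mem_cons] at hx
    rcases hx with h | h | h | h
    · exact hpos x (List.mem_append_left _ h)
    · omega
    · omega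
    · exact hpos x (List.mem_append_right _ (List.mem_cons_of_mem _ h))
  · simp only [List.sum_append, List.sum_cons]; omega
  · -- cost comparison
    have hkey : ∀ g : ℕ → ℝ, ∑ s ∈ Finset.range (μ + 1 + b'), g s
        = ∑ s ∈ Finset.range (μ+1), g s + ∑ s ∈ Finset.range b', g (μ+1+s) := by
      intro g; exact Finset.sum_range_add g (μ+1) b'
    have horders : ordersFrom 1 (l1 ++ (μ + 1 + b') :: l2)
        = ordersFrom 1 l1 ++ (a, μ + 1 + b') :: ordersFrom (a + (μ + 1 + b')) l2 := by
      rw [ordersFrom_append]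
      simp only [ordersFrom, ← ha]
    have horders' : ordersFrom 1 (l1 ++ (μ+1) :: b' :: l2)
        = ordersFrom 1 l1 ++ (a, μ+1) :: (a + (μ+1), b') :: ordersFrom (a + (μ + 1 + b')) l2 := by
      rw [ordersFrom_append]
      simp only [ordersFrom, ← ha, Nat.add_assoc]
    unfold CT
    rw [horders, horders']
    simp only [List.map_append, List.map_cons, List.sum_append, List.sum_cons,
      List.length_append, List.length_cons]
    rw [hkey (fun s => (s:ℝ) * α (a + s)), hkey (fun s => α (a + s)),
        hkey (fun s => α (a + s) * max ((s:ℝ) - (μ:ℝ)) 0)]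
    rw [mul_add Cm, mul_add Ca, mul_add Cd]
    have e1 : ∀ s : ℕ, a + (μ + 1 + s) = a + (μ+1) + s := by omega
    have hm : ∑ s ∈ Finset.range b', (s:ℝ) * α (a + (μ+1) + s)
        ≤ ∑ s ∈ Finset.range b', ((μ+1+s : ℕ):ℝ) * α (a + (μ+1+s)) := by
      apply Finset.sum_le_sum
      intro s _
      rw [e1]
      have h0 := (hαpos (a + (μ+1) + s)).le
      have hc : (s:ℝ) ≤ ((μ+1+s : ℕ):ℝ) := by push_cast; linarith [Nat.cast_nonneg (α := ℝ) μ]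
      exact mul_le_mul_of_nonneg_right hc h0
    have hd : ∑ s ∈ Finset.range b', α (a + (μ+1) + s) * max ((s:ℝ) - (μ:ℝ)) 0 + αmin * b'
        ≤ ∑ s ∈ Finset.range b', α (a + (μ+1+s)) * max (((μ+1+s : ℕ):ℝ) - (μ:ℝ)) 0 := by
      have hterm : ∀ s ∈ Finset.range b',
          α (a + (μ+1) + s) * max ((s:ℝ) - (μ:ℝ)) 0 + αmin
          ≤ α (a + (μ+1+s)) * max (((μ+1+s : ℕ):ℝ) - (μ:ℝ)) 0 := by
        intro s hs
        rw [e1]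
        have hpo := hαpos (a + (μ+1) + s)
        have hmn := hα2 s hs
        have h1 : max (((μ+1+s : ℕ):ℝ) - (μ:ℝ)) 0 = (s:ℝ) + 1 := by
          push_cast
          rw [max_eq_left (by linarith [Nat.cast_nonneg (α := ℝ) s])]
          ring
        have h2 : max ((s:ℝ) - (μ:ℝ)) 0 ≤ (s:ℝ) :=
          max_le (by linarith [Nat.cast_nonneg (α := ℝ) μ]) (Nat.cast_nonneg s)
        rw [h1]
        nlinarith
      calc ∑ s ∈ Finset.range b', α (a + (μ+1) + s) * max ((s:ℝ) - (μ:ℝ)) 0 + αmin * b'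
          = ∑ s ∈ Finset.range b', (α (a + (μ+1) + s) * max ((s:ℝ) - (μ:ℝ)) 0 + αmin) := by
            rw [Finset.sum_add_distrib, Finset.sum_const, Finset.card_range]
            push_cast; ring
        _ ≤ _ := Finset.sum_le_sum hterm
    have hmc : Cm * ∑ s ∈ Finset.range b', (s:ℝ) * α (a + (μ+1) + s)
        ≤ Cm * ∑ s ∈ Finset.range b', ((μ+1+s : ℕ):ℝ) * α (a + (μ+1+s)) :=
      mul_le_mul_of_nonneg_left hm hCm.le
    have hdc : Cd * (∑ s ∈ Finset.range b', α (a + (μ+1) + s) * max ((s:ℝ) - (μ:ℝ)) 0 + αmin * b')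
        ≤ Cd * ∑ s ∈ Finset.range b', α (a + (μ+1+s)) * max (((μ+1+s : ℕ):ℝ) - (μ:ℝ)) 0 :=
      mul_le_mul_of_nonneg_left hd hCd.le
    have hac : ∑ s ∈ Finset.range b', α (a + (μ+1) + s)
        = ∑ s ∈ Finset.range b', α (a + (μ+1+s)) := by
      apply Finset.sum_congr rfl; intro s _; rw [e1]
    have hacc : Ca * ∑ s ∈ Finset.range b', α (a + (μ+1) + s)
        = Ca * ∑ s ∈ Finset.range b', α (a + (μ+1+s)) := by rw [hac]
    rw [mul_add Cd] at hdc
    push_cast at hmc hdc hacc ⊢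
    linarith [hCpb, hmc, hdc, hacc]
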